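/- arXiv:2601.00287 — 4 statements merged into one kernel-verified Lean document; each statement's English description precedes it below -/
import Mathlib

section
/- Let X be a random variable (covariate), Y a real random variable (potential outcome), and W a {0,1}-valued random variable (treatment-version indicator). Suppose Y is conditionally independent of W given X, and let p(X) = E[W | X]. Then Y is conditionally independent of W given p(X). -/
open MeasureTheory ProbabilityTheory MeasurableSpace

/-!
Write `B = {W = 1}`, so that `W` is the indicator of `B` and `Y ⫫ W` given a σ-algebra `m`
means that every event `A = {Y ∈ s}` is conditionally independent of `B` given `m`.
Since `p(X) = P(B | X)` is `σ(p(X))`-measurable, the tower property and pulling out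
`p(X)` give
`P(A ∩ B | p(X)) = E[P(A | X) p(X) | p(X)] = P(A | p(X)) p(X) = P(A | p(X)) P(B | p(X))`.
-/

section

variable {Ω : Type*} {m' m₁ m₂ : MeasurableSpace Ω} {mΩ : MeasurableSpace Ω}
  [StandardBorelSpace Ω] {μ : Measure Ω} [IsFiniteMeasure μ]

theorem CondIndepSet.of_le_of_stronglyMeasurable_condExp (hm₁₂ : m₁ ≤ m₂) (hm₂ : m₂ ≤ mΩ)
    {A B : Set Ω} (hA : MeasurableSet A) (hB : MeasurableSet B) (hAB : CondIndepSet m₂ hm₂ A B μ)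
    (hB₁ : StronglyMeasurable[m₁] (μ⟦B | m₂⟧)) :
    CondIndepSet m₁ (hm₁₂.trans hm₂) A B μ := by
  rw [condIndepSet_iff _ _ _ _ hA hB] at hAB ⊢
  have hB_eq : μ⟦B | m₁⟧ =ᵐ[μ] μ⟦B | m₂⟧ :=
    (condExp_condExp_of_le hm₁₂ hm₂).symm.trans
      (condExp_of_stronglyMeasurable (hm₁₂.trans hm₂) hB₁ integrable_condExp).eventuallyEq
  calc μ⟦A ∩ B | m₁⟧
      =ᵐ[μ] μ[μ⟦A ∩ B | m₂⟧ | m₁] := (condExp_condExp_of_le hm₁₂ hm₂).symm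
    _ =ᵐ[μ] μ[μ⟦A | m₂⟧ * μ⟦B | m₂⟧ | m₁] := condExp_congr_ae hAB
    _ =ᵐ[μ] μ[μ⟦A | m₂⟧ | m₁] * μ⟦B | m₂⟧ :=
      condExp_mul_of_stronglyMeasurable_right hB₁ (integrable_condExp.congr hAB)
        integrable_condExp
    _ =ᵐ[μ] μ⟦A | m₁⟧ * μ⟦B | m₁⟧ := (condExp_condExp_of_le hm₁₂ hm₂).mul hB_eq.symm

theorem condIndep_generateFrom_singleton_right {hm' : m' ≤ mΩ} (hm₁ : m₁ ≤ mΩ) {B : Set Ω}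
    (hB : MeasurableSet B) (h : ∀ A, MeasurableSet[m₁] A → CondIndepSet m' hm' A B μ) :
    CondIndep m' m₁ (generateFrom {B}) hm' μ := by
  refine CondIndepSets.condIndep hm₁ (generateFrom_le fun _ hs ↦ hs ▸ hB)
    (@isPiSystem_measurableSet Ω m₁) (.singleton B) (@generateFrom_measurableSet Ω m₁).symm rfl ?_
  refine (condIndepSets_iff _ _ _ _ (fun A hA ↦ hm₁ A hA) (by simpa using hB) μ).mpr ?_
  rintro A _ hA rfl
  exact (condIndepSet_iff _ _ _ _ (hm₁ A hA) hB μ).mp (h A hA)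

end

theorem comap_indicator_le_generateFrom {Ω β : Type*} [MeasurableSpace β] [Zero β]
    (B : Set Ω) (c : β) :
    MeasurableSpace.comap (B.indicator fun _ ↦ c) ‹_› ≤ generateFrom {B} :=
  (measurable_const.indicator (measurableSet_generateFrom (Set.mem_singleton B))).comap_le

theorem eq_indicator_preimage_one {Ω β : Type*} [Zero β] [One β] [NeZero (1 : β)]
    {W : Ω → β} (hW : ∀ ω, W ω = 0 ∨ W ω = 1) :
    W = (W ⁻¹' {1}).indicator fun _ ↦ 1 := by
  funext ω
  rcases hW ω with h | h <;> simp [h]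

theorem propensity_score_balancing_general
    {Ω : Type*} [mΩ : MeasurableSpace Ω] [StandardBorelSpace Ω]
    {μ : Measure Ω} [IsProbabilityMeasure μ] {p : ℕ}
    (X : Ω → (Fin p → ℝ)) (Y W : Ω → ℝ)
    (hX : Measurable X) (hY : Measurable Y) (hW : Measurable W)
    (hWval : ∀ ω, W ω = 0 ∨ W ω = 1)
    (hCI : CondIndepFun (MeasurableSpace.comap X inferInstance) hX.comap_le Y W μ)
    (pX : Ω → ℝ)
    (hpX : pX = μ[W | MeasurableSpace.comap X inferInstance])
    (hpXmeas : Measurable pX) :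
    CondIndepFun (MeasurableSpace.comap pX inferInstance) hpXmeas.comap_le Y W μ := by
  set B := W ⁻¹' {1}
  have hB : MeasurableSet B := hW (measurableSet_singleton 1)
  have hWB : W = B.indicator fun _ ↦ 1 := eq_indicator_preimage_one hWval
  have hpX_le : MeasurableSpace.comap pX inferInstance ≤ MeasurableSpace.comap X inferInstance :=
    (hpX ▸ stronglyMeasurable_condExp).measurable.comap_le
  have hB_pX : StronglyMeasurable[MeasurableSpace.comap pX inferInstance]
      (μ⟦B | MeasurableSpace.comap X inferInstance⟧) := by
    rw [← hWB, ← hpX]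
    exact (comap_measurable pX).stronglyMeasurable
  rw [condIndepFun_iff_condIndep] at hCI ⊢
  refine condIndep_of_condIndep_of_le_right ?_ (hWB ▸ comap_indicator_le_generateFrom B 1)
  refine condIndep_generateFrom_singleton_right hY.comap_le hB fun A hA ↦ ?_
  exact CondIndepSet.of_le_of_stronglyMeasurable_condExp hpX_le hX.comap_le (hY.comap_le A hA)
    hB (hCI.condIndepSet_of_measurableSet hA ⟨{1}, measurableSet_singleton 1, rfl⟩) hB_pX

/-- Proposition 1 of the paper, balancing property of the
generalized propensity score: if `Y ⫫ W | X` and `pX = E[W | σ(X)]`, then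
`Y ⫫ W | pX`. -/
theorem propensity_score_balancing
    {Ω : Type*} [mΩ : MeasurableSpace Ω] [StandardBorelSpace Ω] [Nonempty Ω]
    {μ : Measure Ω} [IsProbabilityMeasure μ] {p : ℕ}
    (X : Ω → (Fin p → ℝ)) (Y W : Ω → ℝ)
    (hX : Measurable X) (hY : Measurable Y) (hW : Measurable W)
    (hWval : ∀ ω, W ω = 0 ∨ W ω = 1)
    (hCI : CondIndepFun (MeasurableSpace.comap X inferInstance) hX.comap_le Y W μ)
    (pX : Ω → ℝ)
    (hpX : pX = μ[W | MeasurableSpace.comap X inferInstance])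
    (hpXmeas : Measurable pX) :
    CondIndepFun (MeasurableSpace.comap pX inferInstance) hpXmeas.comap_le Y W μ :=
  propensity_score_balancing_general (mΩ := mΩ) X Y W hX hY hW hWval hCI pX hpX hpXmeas
end

section
/- Under the assumptions of IPW identification, the mean potential outcome admits the responsibility-weighted representation: E[Y^{tv}] = E[ (D · r(Y,X) / (e(X)·π(X))) · Y ], where r(Y,X) = E[Z | Y, X, D=1]·1{D=1} interpreted as the posterior probability that the latent version equals v given the observed data. -/
open MeasureTheory ProbabilityTheory
open scoped ENNReal

/-!
Conditional independence of `Z` and `Y^{tv}` given `X` factors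
`E[Z·Y^{tv} | X] = e(X)π(X)·E[Y^{tv} | X]`, so weighting `Z·Y^{tv}` by `1/(e(X)π(X))` recovers
`E[Y^{tv}]`; the same factorization for `|Y^{tv}|` shows that the unbounded weighted variable is
integrable. By consistency that variable equals `W·Z` with `W = D·Y/(e(X)π(X))` measurable with
respect to `σ(Y, X, D)`, and the tower property replaces `Z` by `r = E[Z | Y, X, D]`.
-/

section ConditionalExpectation

variable {Ω : Type*} {m mΩ : MeasurableSpace Ω} {μ : Measure Ω}

theorem lintegral_mul_condLExp (hm : m ≤ mΩ) [SigmaFinite (μ.trim hm)] {b : Ω → ℝ≥0∞}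
    (hb : Measurable[m] b) {f : Ω → ℝ≥0∞} (hf : AEMeasurable f μ) :
    ∫⁻ ω, b ω * μ⁻[f | m] ω ∂μ = ∫⁻ ω, b ω * f ω ∂μ := by
  have hf' : Measurable (μ⁻[f | m]) := measurable_condLExp' m μ f
  refine @Measurable.ennreal_induction Ω m
    (fun b => ∫⁻ ω, b ω * μ⁻[f | m] ω ∂μ = ∫⁻ ω, b ω * f ω ∂μ) ?indicator ?add ?iSup b hb
  case indicator =>
    intro c s hs
    simp only [← Set.indicator_mul_left, lintegral_indicator (hm s hs)]
    rw [lintegral_const_mul _ hf', lintegral_const_mul'' _ hf.restrict,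
      setLIntegral_condLExp hm μ f hs]
  case add =>
    intro b₁ b₂ _ hb₁ _ ih₁ ih₂
    simp only [Pi.add_apply, add_mul]
    have hb₁' : Measurable b₁ := hb₁.mono hm le_rfl
    rw [lintegral_add_left (f := fun ω => b₁ ω * μ⁻[f | m] ω) (hb₁'.mul hf'),
      lintegral_add_left' (f := fun ω => b₁ ω * f ω) (hb₁'.aemeasurable.mul hf), ih₁, ih₂]
  case iSup =>
    intro bₙ hbₙ hmono ih
    simp only [ENNReal.iSup_mul]
    rw [lintegral_iSup (f := fun n ω => bₙ n ω * μ⁻[f | m] ω)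
      (fun n => ((hbₙ n).mono hm le_rfl).mul hf')
      (fun i j hij ω => mul_le_mul_left (hmono hij ω) _),
      lintegral_iSup' (f := fun n ω => bₙ n ω * f ω)
      (fun n => ((hbₙ n).mono hm le_rfl).aemeasurable.mul hf)
      (Filter.Eventually.of_forall fun ω i j hij => mul_le_mul_left (hmono hij ω) _)]
    simp only [ih]

theorem integrable_mul_of_integrable_mul_condExp (hm : m ≤ mΩ) [SigmaFinite (μ.trim hm)]
    {b g : Ω → ℝ} (hb : Measurable[m] b) (hb₀ : 0 ≤ᵐ[μ] b) (hg : Integrable g μ)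
    (hg₀ : 0 ≤ᵐ[μ] g) (h : Integrable (fun ω => b ω * μ[g | m] ω) μ) :
    Integrable (fun ω => b ω * g ω) μ := by
  have hb' : Measurable b := hb.mono hm le_rfl
  refine ⟨hb'.aestronglyMeasurable.mul hg.aestronglyMeasurable, ?_⟩
  have hcond₀ : 0 ≤ᵐ[μ] μ[g | m] := condExp_nonneg hg₀
  rw [hasFiniteIntegral_iff_ofReal
    (by filter_upwards [hb₀, hg₀] with ω h₁ h₂ using mul_nonneg h₁ h₂)]
  have hfin := (hasFiniteIntegral_iff_ofReal
    (by filter_upwards [hb₀, hcond₀] with ω h₁ h₂ using mul_nonneg h₁ h₂)).1 h.2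
  calc ∫⁻ ω, ENNReal.ofReal (b ω * g ω) ∂μ
      = ∫⁻ ω, ENNReal.ofReal (b ω) * ENNReal.ofReal (g ω) ∂μ :=
        lintegral_congr_ae (by filter_upwards [hb₀] with ω h using ENNReal.ofReal_mul h)
    _ = ∫⁻ ω, ENNReal.ofReal (b ω) * μ⁻[fun ω => ENNReal.ofReal (g ω) | m] ω ∂μ :=
        (lintegral_mul_condLExp hm hb.ennreal_ofReal hg.1.aemeasurable.ennreal_ofReal).symm
    _ = ∫⁻ ω, ENNReal.ofReal (b ω * μ[g | m] ω) ∂μ := by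
        refine lintegral_congr_ae ?_
        filter_upwards [hb₀, condLExp_ofReal m hg hg₀] with ω h₁ h₂
        rw [h₂, ENNReal.ofReal_mul h₁]
    _ < ⊤ := hfin

theorem integral_mul_condExp (hm : m ≤ mΩ) [SigmaFinite (μ.trim hm)] {b g : Ω → ℝ}
    (hb : StronglyMeasurable[m] b) (hbg : Integrable (b * g) μ) (hg : Integrable g μ) :
    ∫ ω, b ω * μ[g | m] ω ∂μ = ∫ ω, b ω * g ω ∂μ := by
  calc ∫ ω, b ω * μ[g | m] ω ∂μ = ∫ ω, μ[b * g | m] ω ∂μ :=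
        integral_congr_ae (condExp_mul_of_stronglyMeasurable_left hb hbg hg).symm
    _ = ∫ ω, b ω * g ω ∂μ := integral_condExp hm

end ConditionalExpectation

section CondIndep

variable {Ω γ : Type*} {mΩ : MeasurableSpace Ω} [StandardBorelSpace Ω] {mγ : MeasurableSpace γ}
  {μ : Measure Ω} [IsFiniteMeasure μ] {k : Ω → γ}

theorem condDistrib_prodMk_ae_eq_prod_of_condIndepFun {β β' : Type*} {mβ : MeasurableSpace β}
    {mβ' : MeasurableSpace β'} [StandardBorelSpace β] [Nonempty β] [StandardBorelSpace β']
    [Nonempty β'] (hk : Measurable k) {f : Ω → β} {g : Ω → β'} (hf : Measurable f)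
    (hg : Measurable g) (hfg : f ⟂ᵢ[k, hk; μ] g) :
    condDistrib (fun ω => (f ω, g ω)) k μ =ᵐ[μ.map k] condDistrib f k μ ×ₖ condDistrib g k μ := by
  refine condDistrib_ae_eq_of_measure_eq_compProd k (hf.prodMk hg).aemeasurable ?_
  rw [Measure.compProd_eq_comp_prod]
  exact (condIndepFun_iff_map_prod_eq_prod_condDistrib_prod_condDistrib hf hg hk).1 hfg

theorem condExp_mul_ae_eq_of_condIndepFun (hk : Measurable k) {f g : Ω → ℝ} (hf : Measurable f)
    (hg : Measurable g) (hfg : f ⟂ᵢ[k, hk; μ] g) (hfi : Integrable f μ) (hgi : Integrable g μ)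
    (hfgi : Integrable (f * g) μ) :
    μ[f * g | mγ.comap k] =ᵐ[μ] μ[f | mγ.comap k] * μ[g | mγ.comap k] := by
  have hprod := condExp_ae_eq_integral_condDistrib hk (hf.prodMk hg).aemeasurable
    (f := fun p : ℝ × ℝ => p.1 * p.2) (by fun_prop) hfgi
  filter_upwards [hprod, condExp_ae_eq_integral_condDistrib' hk hfi,
    condExp_ae_eq_integral_condDistrib' hk hgi,
    ae_of_ae_map hk.aemeasurable (condDistrib_prodMk_ae_eq_prod_of_condIndepFun hk hf hg hfg)]
    with ω h₁ h₂ h₃ h₄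
  rw [Pi.mul_apply, h₂, h₃, ← integral_prod_mul, ← Kernel.prod_apply, ← h₄]
  exact h₁

end CondIndep

section UnitInterval

variable {Ω : Type*} {mΩ : MeasurableSpace Ω} {μ : Measure Ω} {Z V : Ω → ℝ}

theorem integrable_of_mem_Icc [IsFiniteMeasure μ] (hZ : Measurable Z)
    (hZ₀₁ : ∀ ω, Z ω ∈ Set.Icc (0 : ℝ) 1) : Integrable Z μ :=
  .of_bound hZ.aestronglyMeasurable 1
    (.of_forall fun ω => (Real.norm_of_nonneg (hZ₀₁ ω).1).trans_le (hZ₀₁ ω).2)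

theorem integrable_mul_of_mem_Icc (hZ : Measurable Z) (hZ₀₁ : ∀ ω, Z ω ∈ Set.Icc (0 : ℝ) 1)
    (hV : Integrable V μ) : Integrable (Z * V) μ :=
  hV.bdd_mul hZ.aestronglyMeasurable
    (.of_forall fun ω => (Real.norm_of_nonneg (hZ₀₁ ω).1).trans_le (hZ₀₁ ω).2)

end UnitInterval

section InverseProbabilityWeighting

variable {Ω γ : Type*} {mΩ : MeasurableSpace Ω} [StandardBorelSpace Ω] {mγ : MeasurableSpace γ}
  {μ : Measure Ω} [IsFiniteMeasure μ] {k : Ω → γ} {q : γ → ℝ} {Z V : Ω → ℝ}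

theorem inv_mul_condExp_mul_ae_eq_condExp (hk : Measurable k) (hqpos : ∀ᵐ ω ∂μ, 0 < q (k ω))
    (hZ : Measurable Z) (hZ₀₁ : ∀ ω, Z ω ∈ Set.Icc (0 : ℝ) 1)
    (hZq : μ[Z | mγ.comap k] =ᵐ[μ] fun ω => q (k ω))
    (hV : Measurable V) (hVi : Integrable V μ) (hZV : Z ⟂ᵢ[k, hk; μ] V) :
    (fun ω => (q (k ω))⁻¹ * μ[Z * V | mγ.comap k] ω) =ᵐ[μ] μ[V | mγ.comap k] := by
  filter_upwards [condExp_mul_ae_eq_of_condIndepFun hk hZ hV hZV (integrable_of_mem_Icc hZ hZ₀₁)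
      hVi (integrable_mul_of_mem_Icc hZ hZ₀₁ hVi), hZq, hqpos] with ω h₁ h₂ h₃
  rw [h₁, Pi.mul_apply, h₂, inv_mul_cancel_left₀ h₃.ne']

theorem integrable_inv_mul_of_condIndepFun (hk : Measurable k) (hq : Measurable q)
    (hqpos : ∀ᵐ ω ∂μ, 0 < q (k ω)) (hZ : Measurable Z) (hZ₀₁ : ∀ ω, Z ω ∈ Set.Icc (0 : ℝ) 1)
    (hZq : μ[Z | mγ.comap k] =ᵐ[μ] fun ω => q (k ω)) (hV : Measurable V) (hVi : Integrable V μ)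
    (hZV : Z ⟂ᵢ[k, hk; μ] V) :
    Integrable (fun ω => (q (k ω))⁻¹ * (Z ω * V ω)) μ := by
  have hweight : Measurable[mγ.comap k] fun ω => (q (k ω))⁻¹ := hq.inv.comp (comap_measurable k)
  have hZ_absV : Integrable (fun ω => (q (k ω))⁻¹ * (Z ω * |V ω|)) μ := by
    refine integrable_mul_of_integrable_mul_condExp hk.comap_le hweight
      (by filter_upwards [hqpos] with ω h using (inv_pos.2 h).le) ?_
      (Filter.Eventually.of_forall fun ω => mul_nonneg (hZ₀₁ ω).1 (abs_nonneg _)) ?_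
    · exact integrable_mul_of_mem_Icc hZ hZ₀₁ hVi.abs
    · exact integrable_condExp.congr (inv_mul_condExp_mul_ae_eq_condExp hk hqpos hZ hZ₀₁ hZq
        hV.abs hVi.abs (hZV.comp measurable_id measurable_abs)).symm
  refine hZ_absV.mono' ((hweight.mono hk.comap_le le_rfl).mul (hZ.mul hV)).aestronglyMeasurable ?_
  filter_upwards [hqpos] with ω h
  rw [norm_mul, norm_mul, Real.norm_of_nonneg (inv_pos.2 h).le,
    Real.norm_of_nonneg (hZ₀₁ ω).1, Real.norm_eq_abs]

theorem integral_inv_mul_of_condIndepFun (hk : Measurable k) (hq : Measurable q)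
    (hqpos : ∀ᵐ ω ∂μ, 0 < q (k ω)) (hZ : Measurable Z) (hZ₀₁ : ∀ ω, Z ω ∈ Set.Icc (0 : ℝ) 1)
    (hZq : μ[Z | mγ.comap k] =ᵐ[μ] fun ω => q (k ω)) (hV : Measurable V) (hVi : Integrable V μ)
    (hZV : Z ⟂ᵢ[k, hk; μ] V) :
    ∫ ω, (q (k ω))⁻¹ * (Z ω * V ω) ∂μ = ∫ ω, V ω ∂μ := by
  have hweight : StronglyMeasurable[mγ.comap k] fun ω => (q (k ω))⁻¹ :=
    (hq.inv.comp (comap_measurable k)).stronglyMeasurable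
  calc ∫ ω, (q (k ω))⁻¹ * (Z ω * V ω) ∂μ
      = ∫ ω, (q (k ω))⁻¹ * μ[Z * V | mγ.comap k] ω ∂μ :=
        (integral_mul_condExp hk.comap_le hweight
          (integrable_inv_mul_of_condIndepFun hk hq hqpos hZ hZ₀₁ hZq hV hVi hZV)
          (integrable_mul_of_mem_Icc hZ hZ₀₁ hVi)).symm
    _ = ∫ ω, μ[V | mγ.comap k] ω ∂μ :=
        integral_congr_ae (inv_mul_condExp_mul_ae_eq_condExp hk hqpos hZ hZ₀₁ hZq hV hVi hZV)
    _ = ∫ ω, V ω ∂μ := integral_condExp hk.comap_le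

end InverseProbabilityWeighting

theorem ipw_responsibility_representation_general
    {Ω : Type*} [mΩ : MeasurableSpace Ω] [StandardBorelSpace Ω]
    {μ : Measure Ω} [IsProbabilityMeasure μ] {p : ℕ}
    (X : Ω → (Fin p → ℝ)) (D Z Ypo Y : Ω → ℝ)
    (e pi : (Fin p → ℝ) → ℝ)
    (hX : Measurable X) (hD : Measurable D) (hZ : Measurable Z)
    (hYpo : Measurable Ypo) (hY : Measurable Y)
    (he : Measurable e) (hpi : Measurable pi)
    (hZval : ∀ ω, Z ω = 0 ∨ Z ω = 1)
    (hZD : ∀ ω, Z ω = 1 → D ω = 1)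
    (hint : Integrable Ypo μ)
    -- generalized propensity score: e(X) = P(D=1|X), e(X)·π(X) = P(D=1,Z=1|X)
    (hpiscore : μ[fun ω => D ω * Z ω | MeasurableSpace.comap X inferInstance]
        =ᵐ[μ] fun ω => e (X ω) * pi (X ω))
    -- positivity
    (hpos : ∀ᵐ ω ∂μ, 0 < e (X ω) ∧ e (X ω) < 1 ∧ 0 < pi (X ω) ∧ pi (X ω) < 1)
    -- weak conditional exchangeability: Y^{tv} ⫫ (D,Z) | X
    (hexch : CondIndepFun (MeasurableSpace.comap X inferInstance) hX.comap_le
        Ypo (fun ω => (D ω, Z ω)) μ)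
    -- consistency: Y = Y^{tv} on {D=1, Z=1}
    (hcons : ∀ ω, D ω = 1 → Z ω = 1 → Y ω = Ypo ω)
    -- the posterior responsibility r = E[Z | Y, X, D]
    (R : Ω → ℝ)
    (hR : R =ᵐ[μ] μ[Z | MeasurableSpace.comap (fun ω => (Y ω, X ω, D ω)) inferInstance]) :
    ∫ ω, Ypo ω ∂μ
      = ∫ ω, (D ω * R ω / (e (X ω) * pi (X ω))) * Y ω ∂μ := by
  have hZ₀₁ : ∀ ω, Z ω ∈ Set.Icc (0 : ℝ) 1 := fun ω => by
    rcases hZval ω with h | h <;> simp [h]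
  have hDZ : (fun ω => D ω * Z ω) = Z := funext fun ω => by
    rcases hZval ω with h | h <;> simp [h, hZD]
  have hZX : μ[Z | MeasurableSpace.comap X inferInstance] =ᵐ[μ] fun ω => e (X ω) * pi (X ω) :=
    hDZ ▸ hpiscore
  have hZYpo : Z ⟂ᵢ[X, hX; μ] Ypo := hexch.symm.comp measurable_snd measurable_id
  have hweight_pos : ∀ᵐ ω ∂μ, 0 < e (X ω) * pi (X ω) := by
    filter_upwards [hpos] with ω h using mul_pos h.1 h.2.2.1
  set W : Ω → ℝ := fun ω => D ω * Y ω * (e (X ω) * pi (X ω))⁻¹ with hW_def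
  have hconsistency : (fun ω => (e (X ω) * pi (X ω))⁻¹ * (Z ω * Ypo ω)) = W * Z := by
    funext ω
    rcases hZval ω with h | h
    · simp [h]
    · simp only [Pi.mul_apply, hW_def, h, hZD ω h, hcons ω (hZD ω h) h]
      ring
  have hW : StronglyMeasurable[MeasurableSpace.comap (fun ω => (Y ω, X ω, D ω)) inferInstance] W :=
    ((by fun_prop : Measurable fun v : ℝ × (Fin p → ℝ) × ℝ =>
      v.2.2 * v.1 * (e v.2.1 * pi v.2.1)⁻¹).comp (comap_measurable _)).stronglyMeasurable
  have hq : Measurable fun x => e x * pi x := he.mul hpi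
  have hWZ : Integrable (W * Z) μ := hconsistency ▸
    integrable_inv_mul_of_condIndepFun hX hq hweight_pos hZ hZ₀₁ hZX hYpo hint hZYpo
  calc ∫ ω, Ypo ω ∂μ = ∫ ω, (e (X ω) * pi (X ω))⁻¹ * (Z ω * Ypo ω) ∂μ :=
        (integral_inv_mul_of_condIndepFun hX hq hweight_pos hZ hZ₀₁ hZX hYpo hint hZYpo).symm
    _ = ∫ ω, W ω * Z ω ∂μ := by rw [hconsistency]; rfl
    _ = ∫ ω, W ω * μ[Z | MeasurableSpace.comap (fun ω => (Y ω, X ω, D ω)) inferInstance] ω ∂μ :=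
        (integral_mul_condExp (hY.prodMk (hX.prodMk hD)).comap_le hW hWZ
          (integrable_of_mem_Icc hZ hZ₀₁)).symm
    _ = ∫ ω, (D ω * R ω / (e (X ω) * pi (X ω))) * Y ω ∂μ := by
        refine integral_congr_ae ?_
        filter_upwards [hR] with ω h
        rw [hW_def, ← h]
        ring

/-- responsibility-weighted IPW representation.  Under the IPW
identification assumptions, with `r = E[Z | Y, X, D]` the posterior probability
of the latent version, `E[Y^{tv}] = E[ D·r(Y,X)·Y / (e(X)·π(X)) ]`. -/
theorem ipw_responsibility_representation
    {Ω : Type*} [mΩ : MeasurableSpace Ω] [StandardBorelSpace Ω] [Nonempty Ω]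
    {μ : Measure Ω} [IsProbabilityMeasure μ] {p : ℕ}
    (X : Ω → (Fin p → ℝ)) (D Z Ypo Y : Ω → ℝ)
    (e pi : (Fin p → ℝ) → ℝ)
    (hX : Measurable X) (hD : Measurable D) (hZ : Measurable Z)
    (hYpo : Measurable Ypo) (hY : Measurable Y)
    (he : Measurable e) (hpi : Measurable pi)
    (hDval : ∀ ω, D ω = 0 ∨ D ω = 1)
    (hZval : ∀ ω, Z ω = 0 ∨ Z ω = 1)
    (hZD : ∀ ω, Z ω = 1 → D ω = 1)
    (hint : Integrable Ypo μ) (hYint : Integrable Y μ)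
    -- generalized propensity score: e(X) = P(D=1|X), e(X)·π(X) = P(D=1,Z=1|X)
    (hescore : (fun ω => e (X ω))
        =ᵐ[μ] μ[D | MeasurableSpace.comap X inferInstance])
    (hpiscore : μ[fun ω => D ω * Z ω | MeasurableSpace.comap X inferInstance]
        =ᵐ[μ] fun ω => e (X ω) * pi (X ω))
    -- positivity
    (hpos : ∀ᵐ ω ∂μ, 0 < e (X ω) ∧ e (X ω) < 1 ∧ 0 < pi (X ω) ∧ pi (X ω) < 1)
    -- weak conditional exchangeability: Y^{tv} ⫫ (D,Z) | X
    (hexch : CondIndepFun (MeasurableSpace.comap X inferInstance) hX.comap_le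
        Ypo (fun ω => (D ω, Z ω)) μ)
    -- consistency: Y = Y^{tv} on {D=1, Z=1}
    (hcons : ∀ ω, D ω = 1 → Z ω = 1 → Y ω = Ypo ω)
    -- the posterior responsibility r = E[Z | Y, X, D]
    (R : Ω → ℝ)
    (hR : R =ᵐ[μ] μ[Z | MeasurableSpace.comap (fun ω => (Y ω, X ω, D ω)) inferInstance]) :
    ∫ ω, Ypo ω ∂μ
      = ∫ ω, (D ω * R ω / (e (X ω) * pi (X ω))) * Y ω ∂μ :=
  ipw_responsibility_representation_general (mΩ := mΩ) X D Z Ypo Y e pi hX hD hZ hYpo hY he hpi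
    hZval hZD hint hpiscore hpos hexch hcons R hR
end

section
/- Let (Y_i, X_i, D_i) be i.i.d., Θ a compact metric space, and g : (sample point) × Θ → ℝ such that θ ↦ g_i(θ) is continuous almost surely and |g_i(θ)| ≤ M_i for all θ with E[M_1] < ∞. If estimators θ̂_n → θ* in probability with θ* ∈ Θ, then (1/n) ∑_{i=1}^n g_i(θ̂_n) → E[g_1(θ*)] in probability. -/
/-!
For `r > 0` let `h_r(a)` be the oscillation of `g a` on the `r`-ball around `θ*`. On the event
`dist θ̂ₙ θ* < r`, the plug-in average differs from the average at `θ*` by at most the sample mean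
of `h_r(ξᵢ)`. By the strong law, the average at `θ*` tends to `E g(ξ₀, θ*)` and the sample mean of
`h_r(ξᵢ)` to `E h_r(ξ₀)`, which is small for small `r` by dominated convergence: `h_r → 0`
pointwise by continuity of `g a` at `θ*`, and `h_r ≤ 2M`.
-/

open MeasureTheory ProbabilityTheory Filter Topology Finset

lemma abs_sub_le_two_mul_of_forall_abs_le {β : Type*} {f : β → ℝ} {M : ℝ}
    (hf : ∀ x, |f x| ≤ M) (x y : β) : |f x - f y| ≤ 2 * M := by
  linarith [abs_sub (f x) (f y), hf x, hf y]

section LocalOscillation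

variable {α Θ : Type*} [PseudoMetricSpace Θ] {g : α → Θ → ℝ} {e : ℕ → Θ} {θ₀ : Θ} {r : ℝ}

/-- The oscillation `sup_{dist θ θ₀ ≤ r} |g a θ - g a θ₀|`, with the supremum taken only over the
points of the sequence `e` so that it is measurable in `a`; for dense `e` it still dominates the
oscillation on the open ball wherever `g a` is continuous. -/
noncomputable def localOscillation (g : α → Θ → ℝ) (e : ℕ → Θ) (θ₀ : Θ) (r : ℝ) (a : α) : ℝ :=
  ⨆ m, if dist (e m) θ₀ ≤ r then |g a (e m) - g a θ₀| else 0

lemma localOscillation_nonneg (a : α) : 0 ≤ localOscillation g e θ₀ r a :=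
  Real.iSup_nonneg fun m => by split_ifs <;> positivity

lemma localOscillation_le {a : α} {C : ℝ} (hC : 0 ≤ C)
    (h : ∀ θ, dist θ θ₀ ≤ r → |g a θ - g a θ₀| ≤ C) : localOscillation g e θ₀ r a ≤ C :=
  Real.iSup_le (fun m => by split_ifs with hm; exacts [h _ hm, hC]) hC

lemma norm_localOscillation_le {a : α} {M : ℝ} (hdom : ∀ θ, |g a θ| ≤ M) :
    ‖localOscillation g e θ₀ r a‖ ≤ 2 * M := by
  rw [Real.norm_of_nonneg (localOscillation_nonneg a)]
  exact localOscillation_le (by linarith [abs_nonneg (g a θ₀), hdom θ₀])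
    fun θ _ => abs_sub_le_two_mul_of_forall_abs_le hdom θ θ₀

lemma abs_sub_le_localOscillation (he : DenseRange e) {a : α} {M : ℝ}
    (hdom : ∀ θ, |g a θ| ≤ M) {θ : Θ} (hc : ContinuousAt (g a) θ) (hθ : dist θ θ₀ < r) :
    |g a θ - g a θ₀| ≤ localOscillation g e θ₀ r a := by
  have hbdd : BddAbove
      (Set.range fun m => if dist (e m) θ₀ ≤ r then |g a (e m) - g a θ₀| else 0) := by
    refine ⟨2 * M, ?_⟩
    rintro _ ⟨m, rfl⟩
    dsimp only
    split_ifs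
    · exact abs_sub_le_two_mul_of_forall_abs_le hdom _ _
    · linarith [abs_nonneg (g a θ₀), hdom θ₀]
  refine le_of_forall_pos_le_add fun ε hε => ?_
  obtain ⟨δ, hδ, hclose⟩ := Metric.continuousAt_iff.1 hc ε hε
  obtain ⟨m, hm⟩ := he.exists_dist_lt θ (lt_min hδ (sub_pos.2 hθ))
  have hm_ball : dist (e m) θ₀ ≤ r := by
    linarith [dist_triangle_left (e m) θ₀ θ, min_le_right δ (r - dist θ θ₀)]
  have hterm : |g a (e m) - g a θ₀| ≤ localOscillation g e θ₀ r a := by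
    have := le_ciSup hbdd m
    rwa [if_pos hm_ball] at this
  have hnear : |g a θ - g a (e m)| < ε := by
    rw [abs_sub_comm, ← Real.dist_eq]
    exact hclose (by rw [dist_comm]; exact hm.trans_le (min_le_left _ _))
  linarith [abs_sub_le (g a θ) (g a (e m)) (g a θ₀)]

lemma tendsto_localOscillation_zero {a : α} (hc : ContinuousAt (g a) θ₀) :
    Tendsto (fun r => localOscillation g e θ₀ r a) (𝓝 0) (𝓝 0) := by
  refine Metric.tendsto_nhds_nhds.2 fun ε hε => ?_
  obtain ⟨δ, hδ, hclose⟩ := Metric.continuousAt_iff.1 hc (ε / 2) (half_pos hε)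
  refine ⟨δ, hδ, fun r hr => ?_⟩
  have hosc : localOscillation g e θ₀ r a ≤ ε / 2 := by
    refine localOscillation_le (half_pos hε).le fun θ hθ => ?_
    rw [← Real.dist_eq]
    refine (hclose ?_).le
    linarith [le_abs_self r, Real.dist_0_eq_abs r ▸ hr]
  rw [Real.dist_0_eq_abs, abs_of_nonneg (localOscillation_nonneg a)]
  linarith

variable [MeasurableSpace α]

lemma measurable_localOscillation (hg : ∀ θ, Measurable fun a => g a θ) :
    Measurable (localOscillation g e θ₀ r) :=
  Measurable.iSup fun m => by
    split_ifs
    · exact ((hg _).sub (hg _)).abs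
    · exact measurable_const

lemma integrable_localOscillation {ν : Measure α} {M : α → ℝ}
    (hg : ∀ θ, Measurable fun a => g a θ) (hdom : ∀ a θ, |g a θ| ≤ M a) (hM : Integrable M ν) :
    Integrable (localOscillation g e θ₀ r) ν :=
  (hM.const_mul 2).mono' (measurable_localOscillation hg).aestronglyMeasurable
    (ae_of_all _ fun a => norm_localOscillation_le (hdom a))

lemma tendsto_integral_localOscillation {ν : Measure α} {M : α → ℝ}
    (hg : ∀ θ, Measurable fun a => g a θ) (hcont : ∀ᵐ a ∂ν, ContinuousAt (g a) θ₀)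
    (hdom : ∀ a θ, |g a θ| ≤ M a) (hM : Integrable M ν) :
    Tendsto (fun r => ∫ a, localOscillation g e θ₀ r a ∂ν) (𝓝 0) (𝓝 0) := by
  have h := tendsto_integral_filter_of_dominated_convergence (fun a => 2 * M a)
    (Eventually.of_forall fun r => (measurable_localOscillation (e := e) (θ₀ := θ₀) (r := r)
      hg).aestronglyMeasurable)
    (Eventually.of_forall fun r => ae_of_all _ fun a => norm_localOscillation_le (hdom a))
    (hM.const_mul 2) (hcont.mono fun a ha => tendsto_localOscillation_zero ha)
  simpa using h

end LocalOscillation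

section InMeasure

variable {Ω : Type*} [MeasurableSpace Ω] {μ : Measure Ω}

lemma abs_inv_mul_sum_sub_le {n : ℕ} {x y z : ℕ → ℝ} (h : ∀ i, |x i - y i| ≤ z i) :
    |(n : ℝ)⁻¹ * ∑ i ∈ range n, x i - (n : ℝ)⁻¹ * ∑ i ∈ range n, y i|
      ≤ (n : ℝ)⁻¹ * ∑ i ∈ range n, z i := by
  rw [← mul_sub, ← sum_sub_distrib, abs_mul, abs_of_nonneg (by positivity)]
  gcongr
  exact (abs_sum_le_sum_abs _ _).trans (sum_le_sum fun i _ => h i)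

theorem tendstoInMeasure_of_forall_abs_sub_le {A T : ℕ → Ω → ℝ} {c : ℝ}
    (hT : TendstoInMeasure μ T atTop fun _ => c)
    (happrox : ∀ ε > 0, ∃ (S : ℕ → Ω → ℝ) (s : ℝ) (B : ℕ → Set Ω), s < ε ∧
      TendstoInMeasure μ S atTop (fun _ => s) ∧ Tendsto (fun n => μ (B n)) atTop (𝓝 0) ∧
      ∀ n, ∀ᵐ ω ∂μ, ω ∉ B n → |A n ω - T n ω| ≤ S n ω) :
    TendstoInMeasure μ A atTop fun _ => c := by
  rw [tendstoInMeasure_iff_dist] at hT ⊢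
  intro ε hε
  obtain ⟨S, s, B, hs, hS, hB, hAT⟩ := happrox (ε / 2) (half_pos hε)
  rw [tendstoInMeasure_iff_dist] at hS
  have hε4 : 0 < ε / 4 := by positivity
  have hcover : ∀ n, μ {ω | ε ≤ dist (A n ω) c} ≤
      μ (B n) + μ {ω | ε / 4 ≤ dist (S n ω) s} + μ {ω | ε / 4 ≤ dist (T n ω) c} := by
    intro n
    refine (measure_mono_ae ?_).trans
      ((measure_union_le _ _).trans (add_le_add_left (measure_union_le _ _) _))
    filter_upwards [hAT n] with ω hω (hfar : ε ≤ dist (A n ω) c)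
    change ω ∈ B n ∪ _ ∪ _
    by_contra! hnear
    simp only [Set.mem_union, Set.mem_ofPred_eq, not_or, not_le, Real.dist_eq] at hnear hfar
    obtain ⟨⟨hωB, hSs⟩, hTc⟩ := hnear
    linarith [hω hωB, abs_sub_le (A n ω) (T n ω) c, le_abs_self (S n ω - s)]
  have hsum := (hB.add (hS _ hε4)).add (hT _ hε4)
  rw [add_zero, add_zero] at hsum
  exact tendsto_of_tendsto_of_tendsto_of_le_of_le tendsto_const_nhds hsum (fun _ => zero_le)
    hcover

variable [IsProbabilityMeasure μ]

theorem tendstoInMeasure_sampleMean {X : ℕ → Ω → ℝ} (hint : Integrable (X 0) μ)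
    (hindep : Pairwise (Function.onFun (IndepFun · · μ) X))
    (hident : ∀ i, IdentDistrib (X i) (X 0) μ μ) :
    TendstoInMeasure μ (fun (n : ℕ) ω => (n : ℝ)⁻¹ * ∑ i ∈ range n, X i ω) atTop
      (fun _ => ∫ ω, X 0 ω ∂μ) := by
  refine tendstoInMeasure_of_tendsto_ae (fun n => ?_) ?_
  · have hX : ∀ i, AEMeasurable (X i) μ := fun i => (hident i).aemeasurable_fst
    fun_prop
  · filter_upwards [strong_law_ae_real X hint hindep hident] with ω hω
    simpa only [div_eq_inv_mul] using hω

theorem tendstoInMeasure_sampleMean_comp {α : Type*} [MeasurableSpace α] {ξ : ℕ → Ω → α}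
    (hξ : ∀ i, Measurable (ξ i)) (hindep : iIndepFun ξ μ)
    (hident : ∀ i, Measure.map (ξ i) μ = Measure.map (ξ 0) μ)
    {f : α → ℝ} (hf : Measurable f) (hint : Integrable (fun ω => f (ξ 0 ω)) μ) :
    TendstoInMeasure μ (fun (n : ℕ) ω => (n : ℝ)⁻¹ * ∑ i ∈ range n, f (ξ i ω)) atTop
      (fun _ => ∫ ω, f (ξ 0 ω) ∂μ) :=
  tendstoInMeasure_sampleMean hint (fun _ _ hij => (hindep.indepFun hij).comp hf hf)
    fun i => IdentDistrib.comp ⟨(hξ i).aemeasurable, (hξ 0).aemeasurable, hident i⟩ hf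

end InMeasure

theorem plugin_sample_average_consistency_general
    {Ω : Type*} [mΩ : MeasurableSpace Ω]
    {μ : Measure Ω} [IsProbabilityMeasure μ]
    {α : Type*} [MeasurableSpace α]
    {Θ : Type*} [MetricSpace Θ] [CompactSpace Θ]
    [MeasurableSpace Θ]
    -- i.i.d. sample (each ξ i stands for the data point (Yᵢ, Xᵢ, Dᵢ))
    (ξ : ℕ → Ω → α) (hξ : ∀ i, Measurable (ξ i))
    (hindep : iIndepFun ξ μ)
    (hident : ∀ i, Measure.map (ξ i) μ = Measure.map (ξ 0) μ)
    -- criterion function, jointly measurable, a.s. continuous in θ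
    (g : α → Θ → ℝ) (hg : Measurable (Function.uncurry g))
    (hcont : ∀ᵐ a ∂(Measure.map (ξ 0) μ), Continuous (fun θ => g a θ))
    -- integrable envelope
    (M : α → ℝ)
    (hdom : ∀ a θ, |g a θ| ≤ M a)
    (hMint : Integrable (fun ω => M (ξ 0 ω)) μ)
    -- estimators converging in probability to θ* ∈ Θ
    (θhat : ℕ → Ω → Θ)
    (θstar : Θ)
    (hθconv : TendstoInMeasure μ θhat atTop (fun _ => θstar)) :
    TendstoInMeasure μ
      (fun (n : ℕ) ω => (n : ℝ)⁻¹ * ∑ i ∈ Finset.range n, g (ξ i ω) (θhat n ω))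
      atTop
      (fun _ => ∫ ω, g (ξ 0 ω) θstar ∂μ) := by
  have : Nonempty Θ := ⟨θstar⟩
  set e := TopologicalSpace.denseSeq Θ
  have hgθ : ∀ θ, Measurable fun a => g a θ := fun _ => hg.of_uncurry_right
  have hgξ : ∀ θ, Measurable fun ω => g (ξ 0 ω) θ := fun θ => (hgθ θ).comp (hξ 0)
  have hcontξ : ∀ i, ∀ᵐ ω ∂μ, Continuous (g (ξ i ω)) := fun i =>
    ae_of_ae_map (hξ i).aemeasurable (hident i ▸ hcont)
  have hT := tendstoInMeasure_sampleMean_comp hξ hindep hident (hgθ θstar)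
    (hMint.mono' (hgξ θstar).aestronglyMeasurable (ae_of_all _ fun ω => hdom _ _))
  refine tendstoInMeasure_of_forall_abs_sub_le hT fun ε hε => ?_
  have hmean := tendsto_integral_localOscillation (e := e) (θ₀ := θstar) hgξ
    ((hcontξ 0).mono fun ω hω => hω.continuousAt) (fun ω => hdom (ξ 0 ω)) hMint
  obtain ⟨r, hr_int, hr_pos⟩ :=
    (((hmean.mono_left (nhdsWithin_le_nhds (s := Set.Ioi 0))).eventually (gt_mem_nhds hε)).and
      self_mem_nhdsWithin).exists
  refine ⟨fun n ω => (n : ℝ)⁻¹ * ∑ i ∈ range n, localOscillation g e θstar r (ξ i ω),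
    ∫ ω, localOscillation g e θstar r (ξ 0 ω) ∂μ, fun n => {ω | r ≤ dist (θhat n ω) θstar},
    hr_int, ?_, tendstoInMeasure_iff_dist.1 hθconv r hr_pos, fun n => ?_⟩
  · exact tendstoInMeasure_sampleMean_comp hξ hindep hident (measurable_localOscillation hgθ)
      (integrable_localOscillation hgξ (fun ω => hdom (ξ 0 ω)) hMint)
  filter_upwards [ae_all_iff.2 hcontξ] with ω hω hnear
  exact abs_inv_mul_sum_sub_le fun i => abs_sub_le_localOscillation
    (TopologicalSpace.denseRange_denseSeq Θ) (hdom _) (hω i).continuousAt (not_le.1 hnear)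

/-- key step in Theorem 1 of the paper: with i.i.d. data, a
compact parameter space, an a.s.-continuous and integrably dominated criterion
function, and estimators converging in probability to `θ*`, the plug-in sample
average `(1/n) ∑ g(ξᵢ, θ̂ₙ)` converges in probability to `E[g(ξ₁, θ*)]`. -/
theorem plugin_sample_average_consistency
    {Ω : Type*} [mΩ : MeasurableSpace Ω]
    {μ : Measure Ω} [IsProbabilityMeasure μ]
    {α : Type*} [MeasurableSpace α]
    {Θ : Type*} [MetricSpace Θ] [CompactSpace Θ]
    [MeasurableSpace Θ] [BorelSpace Θ]
    -- i.i.d. sample (each ξ i stands for the data point (Yᵢ, Xᵢ, Dᵢ))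
    (ξ : ℕ → Ω → α) (hξ : ∀ i, Measurable (ξ i))
    (hindep : iIndepFun ξ μ)
    (hident : ∀ i, Measure.map (ξ i) μ = Measure.map (ξ 0) μ)
    -- criterion function, jointly measurable, a.s. continuous in θ
    (g : α → Θ → ℝ) (hg : Measurable (Function.uncurry g))
    (hcont : ∀ᵐ a ∂(Measure.map (ξ 0) μ), Continuous (fun θ => g a θ))
    -- integrable envelope
    (M : α → ℝ) (hMmeas : Measurable M)
    (hdom : ∀ a θ, |g a θ| ≤ M a)
    (hMint : Integrable (fun ω => M (ξ 0 ω)) μ)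
    -- estimators converging in probability to θ* ∈ Θ
    (θhat : ℕ → Ω → Θ) (hθhat : ∀ n, Measurable (θhat n))
    (θstar : Θ)
    (hθconv : TendstoInMeasure μ θhat atTop (fun _ => θstar)) :
    TendstoInMeasure μ
      (fun (n : ℕ) ω => (n : ℝ)⁻¹ * ∑ i ∈ Finset.range n, g (ξ i ω) (θhat n ω))
      atTop
      (fun _ => ∫ ω, g (ξ 0 ω) θstar ∂μ) :=
  plugin_sample_average_consistency_general (mΩ := mΩ) ξ hξ hindep hident g hg hcont M hdom hMint
    θhat θstar hθconv
end

section
/- Under the IPW identification assumptions for each version v in a finite set V, if ψ_v = E[Y^{tv}] is identified for each v and π_v(x) = P(V=v | T=t, X=x), then the treatment-level mean potential outcome satisfies E[Y^{(t)}] = E[ ∑_{v ∈ V} π_v(X) · E[Y^{tv} | X] ], i.e., the treatment-specific average outcome is the version-probability-weighted mixture of version-specific conditional means, marginalized over X. -/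
/-!
Splitting `Y^{(t)} = Y^{t V}` along the events `{V = v}` reduces the claim to
`E[1{V = v} Y^{tv}] = E[π_v(X) E[Y^{tv} | X]]`. Under the regular conditional distribution
given `X`, the conditional independence of `Y^{tv}` and `V` becomes ordinary independence for
almost every fibre, where the expectation of the product factors; integrating back out gives
`E[1{V = v} Y^{tv} | X] = P(V = v | X) E[Y^{tv} | X]`.
-/

open MeasureTheory ProbabilityTheory MeasurableSpace

lemma Finset.sum_indicator_preimage_singleton_apply {α ι M : Type*} [Fintype ι] [DecidableEq ι]
    [AddCommMonoid M] (f : ι → α → M) (g : α → ι) (a : α) :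
    ∑ i, (g ⁻¹' {i}).indicator (f i) a = f (g a) a := by
  simp [Set.indicator, eq_comm]

namespace ProbabilityTheory

variable {Ω β ι : Type*} {m : MeasurableSpace Ω} [mΩ : MeasurableSpace Ω] [StandardBorelSpace Ω]
  {μ : Measure Ω} [IsFiniteMeasure μ] {hm : m ≤ mΩ}

lemma CondIndepFun.ae_indepFun_condExpKernel {β' : Type*} [MeasurableSpace β]
    [MeasurableSpace β'] [CountableOrCountablyGenerated Ω (β × β')] {f : Ω → β} {g : Ω → β'}
    (hfg : CondIndepFun m hm f g μ) (hf : Measurable f) (hg : Measurable g) :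
    ∀ᵐ ω ∂μ, IndepFun f g (condExpKernel μ m ω) := by
  filter_upwards [ae_of_ae_trim hm ((condIndepFun_iff_map_prod_eq_prod_map_map hf hg).mp hfg)]
    with ω hω
  rw [indepFun_iff_map_prod_eq_prod_map_map hf.aemeasurable hg.aemeasurable]
  simpa [Kernel.map_apply _ (hf.prodMk hg), Kernel.map_apply _ hf, Kernel.map_apply _ hg,
    Kernel.prod_apply] using hω

lemma CondIndepFun.condExp_indicator_preimage_ae_eq_mul [MeasurableSpace β] {Y : Ω → ℝ}
    {g : Ω → β} [CountableOrCountablyGenerated Ω (ℝ × β)]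
    (hYg : CondIndepFun m hm Y g μ) (hY : Measurable Y) (hg : Measurable g)
    (hY_int : Integrable Y μ) {s : Set β} (hs : MeasurableSet s) :
    μ[(g ⁻¹' s).indicator Y | m]
      =ᵐ[μ] μ[(g ⁻¹' s).indicator (fun _ => (1 : ℝ)) | m] * μ[Y | m] := by
  have hgs : MeasurableSet (g ⁻¹' s) := hg hs
  filter_upwards [condExp_ae_eq_integral_condExpKernel hm (hY_int.indicator hgs),
    condExp_ae_eq_integral_condExpKernel hm ((integrable_const (1 : ℝ)).indicator hgs),
    condExp_ae_eq_integral_condExpKernel hm hY_int,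
    hYg.ae_indepFun_condExpKernel hY hg] with ω h_ind h_one h_Y h_indep
  have h_comp : IndepFun Y (s.indicator (fun _ => (1 : ℝ)) ∘ g) (condExpKernel μ m ω) :=
    h_indep.comp measurable_id (measurable_const.indicator hs)
  have h_split :
      (g ⁻¹' s).indicator Y = fun ω => Y ω * (s.indicator (fun _ => (1 : ℝ)) ∘ g) ω := by
    ext ω; by_cases h : g ω ∈ s <;> simp [Set.indicator, h]
  rw [Pi.mul_apply, h_ind, h_one, h_Y, h_split, h_comp.integral_fun_mul_eq_mul_integral
    hY.aestronglyMeasurable ((measurable_const.indicator hs).comp hg).aestronglyMeasurable, mul_comm]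
  rfl

lemma integral_eq_integral_sum_condExp_mul_condExp [Fintype ι] [MeasurableSpace ι]
    [MeasurableSingletonClass ι] {f : ι → Ω → ℝ} {g : Ω → ι}
    (hfg : ∀ i, CondIndepFun m hm (f i) g μ) (hf : ∀ i, Measurable (f i)) (hg : Measurable g)
    (hf_int : ∀ i, Integrable (f i) μ) :
    ∫ ω, f (g ω) ω ∂μ = ∫ ω, ∑ i, μ[(g ⁻¹' {i}).indicator (fun _ => (1 : ℝ)) | m] ω
      * μ[f i | m] ω ∂μ := by
  classical
  have h_int (i : ι) : Integrable ((g ⁻¹' {i}).indicator (f i)) μ :=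
    (hf_int i).indicator (hg (measurableSet_singleton i))
  have h_factor (i : ι) := (hfg i).condExp_indicator_preimage_ae_eq_mul (hf i) hg (hf_int i)
      (measurableSet_singleton i)
  calc ∫ ω, f (g ω) ω ∂μ = ∑ i, ∫ ω, (g ⁻¹' {i}).indicator (f i) ω ∂μ := by
        simp_rw [← Finset.sum_indicator_preimage_singleton_apply f g]
        exact integral_finsetSum _ fun i _ => h_int i
    _ = ∑ i, ∫ ω, μ[(g ⁻¹' {i}).indicator (f i) | m] ω ∂μ := by
        simp_rw [integral_condExp hm]
    _ = ∑ i, ∫ ω, (μ[(g ⁻¹' {i}).indicator (fun _ => (1 : ℝ)) | m] * μ[f i | m]) ω ∂μ :=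
        Finset.sum_congr rfl fun i _ => integral_congr_ae (h_factor i)
    _ = _ := (integral_finsetSum _ fun i _ => integrable_condExp.congr (h_factor i)).symm

end ProbabilityTheory

theorem version_mixed_mean_outcome_general
    {Ω : Type*} [mΩ : MeasurableSpace Ω] [StandardBorelSpace Ω]
    {μ : Measure Ω} [IsProbabilityMeasure μ] {p : ℕ}
    {V : Type*} [Fintype V] [MeasurableSpace V] [MeasurableSingletonClass V]
    (X : Ω → (Fin p → ℝ)) (hX : Measurable X)
    -- version-specific potential outcomes Y^{tv}, each integrable
    (Ypo : V → Ω → ℝ) (hYpo : ∀ v, Measurable (Ypo v))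
    (hint : ∀ v, Integrable (Ypo v) μ)
    (Vr : Ω → V) (hVr : Measurable Vr)
    -- gating probabilities: P(V = v | X) = π_v(X)
    (pi : V → (Fin p → ℝ) → ℝ)
    (hgate : ∀ v, μ[(Vr ⁻¹' {v}).indicator (fun _ => (1 : ℝ))
        | MeasurableSpace.comap X inferInstance] =ᵐ[μ] fun ω => pi v (X ω))
    -- weak conditional exchangeability: Y^{tv} ⫫ V | X for each v
    (hexch : ∀ v, CondIndepFun (MeasurableSpace.comap X inferInstance) hX.comap_le
        (Ypo v) Vr μ)
    -- the compound-treatment outcome: Y^{(t)} = Y^{t, V}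
    (Yt : Ω → ℝ) (hYt : ∀ ω, Yt ω = Ypo (Vr ω) ω) :
    ∫ ω, Yt ω ∂μ
      = ∫ ω, ∑ v, pi v (X ω)
          * (condExp (MeasurableSpace.comap X inferInstance) μ (Ypo v) ω) ∂μ := by
  simp_rw [hYt, integral_eq_integral_sum_condExp_mul_condExp hexch hYpo hVr hint]
  refine integral_congr_ae ?_
  filter_upwards [ae_all_iff.mpr hgate] with ω hω
  simp_rw [hω]

/-- the treatment-specific mean potential outcome is the
version-probability-weighted mixture of version-specific conditional means:
`E[Y^{(t)}] = E[ ∑_v π_v(X) E[Y^{tv} | X] ]`, where the version is assigned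
according to its natural conditional distribution `π_v(X)`. -/
theorem version_mixed_mean_outcome
    {Ω : Type*} [mΩ : MeasurableSpace Ω] [StandardBorelSpace Ω] [Nonempty Ω]
    {μ : Measure Ω} [IsProbabilityMeasure μ] {p : ℕ}
    {V : Type*} [Fintype V] [MeasurableSpace V] [MeasurableSingletonClass V]
    (X : Ω → (Fin p → ℝ)) (hX : Measurable X)
    -- version-specific potential outcomes Y^{tv}, each integrable
    (Ypo : V → Ω → ℝ) (hYpo : ∀ v, Measurable (Ypo v))
    (hint : ∀ v, Integrable (Ypo v) μ)
    (Vr : Ω → V) (hVr : Measurable Vr)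
    -- gating probabilities: P(V = v | X) = π_v(X)
    (pi : V → (Fin p → ℝ) → ℝ) (hpi : ∀ v, Measurable (pi v))
    (hgate : ∀ v, μ[(Vr ⁻¹' {v}).indicator (fun _ => (1 : ℝ))
        | MeasurableSpace.comap X inferInstance] =ᵐ[μ] fun ω => pi v (X ω))
    -- weak conditional exchangeability: Y^{tv} ⫫ V | X for each v
    (hexch : ∀ v, CondIndepFun (MeasurableSpace.comap X inferInstance) hX.comap_le
        (Ypo v) Vr μ)
    -- the compound-treatment outcome: Y^{(t)} = Y^{t, V}
    (Yt : Ω → ℝ) (hYt : ∀ ω, Yt ω = Ypo (Vr ω) ω)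
    (hYtint : Integrable Yt μ) :
    ∫ ω, Yt ω ∂μ
      = ∫ ω, ∑ v, pi v (X ω)
          * (condExp (MeasurableSpace.comap X inferInstance) μ (Ypo v) ω) ∂μ :=
  version_mixed_mean_outcome_general (mΩ := mΩ) X hX Ypo hYpo hint Vr hVr pi hgate hexch Yt hYt
end
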